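/- Let q = 0, m = n ≥ 1, and z ∈ ℂˣ. Index the tensor factors of F^{⊗n²} by the vertices (r,c) of the n×n grid. Then z · S(z)^{(1,0,…,0)}_{(1,0,…,0)} = ∑_{i=0}^{n} X_i(z) ⊗ B_i, where X_i(z) acts on the factors indexed by Δ = {(r,c) : r+c ≤ n}, and B_i acts as the identity on the factors indexed by the anti-diagonal vertices (n,1), (n−1,2), …, (n−i+1,i), as a⁻ on the remaining anti-diagonal factors (n−i,i+1), …, (1,n), as a⁺ on each of the n−1 factors indexed by the vertices (r,c) with r+c = n+2 (namely (n,2), (n−1,3), …, (2,n)), and as the identity on all factors with r+c > n+2. -/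

import Mathlib

open scoped TensorProduct
open scoped Classical

noncomputable section

/-- The Fock space: complex vector space with basis `{|m⟩ : m ∈ ℕ}`. -/
abbrev FockSp : Type := ℕ →₀ ℂ

/-- basis vector `|m⟩` -/
def ket (m : ℕ) : FockSp := Finsupp.single m 1

/-- linear operator on the Fock space determined by its values on basis vectors -/
def opOfFun (g : ℕ → FockSp) : Module.End ℂ FockSp :=
  Finsupp.lsum ℂ fun m => LinearMap.toSpanSingleton ℂ FockSp (g m)

/-- `a⁺|m⟩ = |m+1⟩` -/
def aPlus : Module.End ℂ FockSp := opOfFun fun m => ket (m + 1)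

/-- `a⁻|m⟩ = (1-q^{2m})|m-1⟩`; at `q = 0` this is `a⁻|m⟩ = |m-1⟩` with `|-1⟩ = 0` -/
def aMinus (q : ℂ) : Module.End ℂ FockSp :=
  opOfFun fun m => (1 - q ^ (2 * m)) • ket (m - 1)

/-- `k|m⟩ = (-q)^m|m⟩`; at `q = 0` this is `k|m⟩ = δ_{m,0}|m⟩` -/
def kOp (q : ℂ) : Module.End ℂ FockSp := opOfFun fun m => (-q) ^ m • ket m

/-- `k̃|m⟩ = q^m|m⟩` -/
def ktOp (q : ℂ) : Module.End ℂ FockSp := opOfFun fun m => q ^ m • ket m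

/-- numerical value of a `{0,1}`-valued edge variable (`false ↔ 0`, `true ↔ 1`) -/
def bv (b : Bool) : ℕ := cond b 1 0

/-- The 3D `L` operator: `Lop q z a b i j` is `L(z)^{a,b}_{i,j}`. -/
def Lop (q z : ℂ) : Bool → Bool → Bool → Bool → Module.End ℂ FockSp
  | false, false, false, false => 1
  | true, true, true, true => 1
  | false, true, true, false => z • aPlus
  | true, false, false, true => z⁻¹ • aMinus q
  | false, true, false, true => kOp q
  | true, false, true, false => q • kOp q
  | _, _, _, _ => 0

/-- tensor power of the Fock space indexed by `ι` -/
abbrev FT (ι : Type) : Type := ⨂[ℂ] _ : ι, FockSp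

noncomputable instance instFTAddCommGroup (ι : Type) : AddCommGroup (FT ι) :=
  Module.addCommMonoidToAddCommGroup ℂ

/-- layer-to-layer transfer matrix `T(z)^{a,b}_{i,j}` on the `m × n` grid:
sum over edge configurations `h` (horizontal) and `v` (vertical) with boundary
`h(r,1) = i_r`, `h(r,n+1) = a_r`, `v(1,c) = b_c`, `v(m+1,c) = j_c`, of the tensor
product over vertices `(r,c)` of `L(z)^{h(r,c+1),v(r,c)}_{h(r,c),v(r+1,c)}`. -/
def Tmat (q z : ℂ) (m n : ℕ) (a i : Fin m → Bool) (b j : Fin n → Bool) :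
    Module.End ℂ (FT (Fin m × Fin n)) :=
  ∑ h : Fin m → Fin (n + 1) → Bool, ∑ v : Fin (m + 1) → Fin n → Bool,
    if (∀ r, h r 0 = i r) ∧ (∀ r, h r (Fin.last n) = a r) ∧
        (∀ c, v 0 c = b c) ∧ (∀ c, v (Fin.last m) c = j c) then
      (PiTensorProduct.map fun rc =>
        Lop q z (h rc.1 rc.2.succ) (v rc.1.castSucc rc.2)
          (h rc.1 rc.2.castSucc) (v rc.1.succ rc.2))
    else 0

/-- `S(z)^{a}_{j} = ∑_{i,b} T(z)^{a,b}_{i,j}` -/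
def Smat (q z : ℂ) (m n : ℕ) (a : Fin m → Bool) (j : Fin n → Bool) :
    Module.End ℂ (FT (Fin m × Fin n)) :=
  ∑ i : Fin m → Bool, ∑ b : Fin n → Bool, Tmat q z m n a i b j

/-- domain of the horizontal edge variables `h(R,C)` (1-based coordinates):
`1 ≤ R ≤ n-1`, `1 ≤ C ≤ n-R+1` -/
def inHdom (n R C : ℕ) : Prop :=
  1 ≤ R ∧ R ≤ n - 1 ∧ 1 ≤ C ∧ C ≤ n - R + 1

/-- domain of the vertical edge variables `v(R,C)` (1-based coordinates):
`1 ≤ C ≤ n-1`, `1 ≤ R ≤ n-C+1`, together with `v(1,n)` -/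
def inVdom (n R C : ℕ) : Prop :=
  (1 ≤ C ∧ C ≤ n - 1 ∧ 1 ≤ R ∧ R ≤ n - C + 1) ∨ (R = 1 ∧ C = n)

/-- boundary value `θ_R = 1` iff `R > n - i` -/
def theta (n i R : ℕ) : Bool := decide (n - i < R)

/-- the staircase `Δ` inside the `n × n` grid (0-based): 1-based `(r+1)+(c+1) ≤ n` -/
def pDel (n : ℕ) (rc : Fin n × Fin n) : Prop := rc.1.val + rc.2.val + 2 ≤ n

abbrev DeltaT (n : ℕ) : Type := {rc : Fin n × Fin n // pDel n rc}

open Fin.NatCast in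
/-- local Boltzmann weight `L(1)^{h(R,C+1),v(R,C)}_{h(R,C),v(R+1,C)}` at the
(1-based) vertex `(R,C) = (d.1+1, d.2+1) ∈ Δ`, at `q = 0` -/
def Xweight (n : ℕ) (h v : Fin (n + 2) → Fin (n + 2) → Bool) (d : DeltaT n) :
    Module.End ℂ FockSp :=
  Lop 0 1 (h (↑(d.1.1.val + 1)) (↑(d.1.2.val + 2)))
    (v (↑(d.1.1.val + 1)) (↑(d.1.2.val + 1)))
    (h (↑(d.1.1.val + 1)) (↑(d.1.2.val + 1)))
    (v (↑(d.1.1.val + 2)) (↑(d.1.2.val + 1)))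

open Fin.NatCast in
/-- admissibility of a configuration `(h,v)` for `X_i`: edge variables vanish
outside their domains, and the SW–NE boundary conditions
`h(R, n-R+1) = θ_R`, `v(n-C+1, C) = θ_{n-C+1}`, `v(1,n) = θ_1` hold. -/
def Xbc (n i : ℕ) (h v : Fin (n + 2) → Fin (n + 2) → Bool) : Prop :=
  (∀ R C : Fin (n + 2), ¬ inHdom n R.val C.val → h R C = false) ∧
  (∀ R C : Fin (n + 2), ¬ inVdom n R.val C.val → v R C = false) ∧
  (∀ R : ℕ, 1 ≤ R → R ≤ n - 1 → h (↑R) (↑(n - R + 1)) = theta n i R) ∧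
  (∀ C : ℕ, 1 ≤ C → C ≤ n - 1 → v (↑(n - C + 1)) (↑C) = theta n i (n - C + 1)) ∧
  v 1 (↑n) = theta n i 1

open Fin.NatCast in
/-- the exponent `v(1,1) + ⋯ + v(1,n)` -/
def Xexp (n : ℕ) (v : Fin (n + 2) → Fin (n + 2) → Bool) : ℕ :=
  ∑ C ∈ Finset.Icc 1 n, bv (v 1 (↑C))

/-- the corner-transfer-matrix operator `X_i(z)` (at `q = 0`) -/
def Xop (n i : ℕ) (z : ℂ) : Module.End ℂ (FT (DeltaT n)) :=
  ∑ h : Fin (n + 2) → Fin (n + 2) → Bool, ∑ v : Fin (n + 2) → Fin (n + 2) → Bool,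
    if Xbc n i h v then
      z ^ Xexp n v • (PiTensorProduct.map (Xweight n h v))
    else 0

/-- the hatted companion `X̂_i`: same configuration sum at `z = 1`, each
contribution multiplied by `v(1,1) + ⋯ + v(1,n)` -/
def XhatOp (n i : ℕ) : Module.End ℂ (FT (DeltaT n)) :=
  ∑ h : Fin (n + 2) → Fin (n + 2) → Bool, ∑ v : Fin (n + 2) → Fin (n + 2) → Bool,
    if Xbc n i h v then
      (Xexp n v : ℂ) • (PiTensorProduct.map (Xweight n h v))
    else 0

abbrev DeltaC (n : ℕ) : Type := {rc : Fin n × Fin n // ¬ pDel n rc}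

/-- the identification `F^{⊗Δ} ⊗ F^{⊗Δᶜ} ≅ F^{⊗(n×n grid)}` -/
def gridSplit (n : ℕ) : (FT (DeltaT n) ⊗[ℂ] FT (DeltaC n)) ≃ₗ[ℂ] FT (Fin n × Fin n) :=
  (PiTensorProduct.tmulEquiv ℂ FockSp).trans
    (PiTensorProduct.reindex ℂ (fun _ => FockSp) (Equiv.sumCompl (pDel n)))

/-- `B_i`: identity on the anti-diagonal factors (1-based `r+c = n+1`) in columns `≤ i`,
`a⁻` on the remaining anti-diagonal factors, `a⁺` on the factors with 1-based `r+c = n+2`,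
and the identity on all factors with `r+c > n+2`. -/
def Bop (n i : ℕ) : Module.End ℂ (FT (DeltaC n)) :=
  PiTensorProduct.map fun d =>
    if d.1.1.val + d.1.2.val + 1 = n then
      (if d.1.2.val + 1 ≤ i then 1 else aMinus 0)
    else if d.1.1.val + d.1.2.val = n then aPlus
    else 1

/-! ### Auxiliary machinery for the proof -/

open Fin.NatCast

section Aux

open Finset

/-- All the `L`-operator patterns with `a = true`, `j = false` vanish at `q = 0`. -/
lemma Lop_a_true_j_false (z : ℂ) (b i : Bool) : Lop 0 z true b i false = 0 := by
  cases b <;> cases i <;> simp [Lop]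

/-- All the `L`-operator patterns with `b = true`, `i = false`, `j = false` vanish. -/
lemma Lop_b_true_i_false_j_false (z : ℂ) (a : Bool) : Lop 0 z a true false false = 0 := by
  cases a <;> simp [Lop]

/-- If `a = j = true` and the weight is nonzero then `i = b`. -/
lemma Lop_diag {z : ℂ} {b i : Bool} (h : Lop 0 z true b i true ≠ 0) : i = b := by
  cases b <;> cases i <;> simp [Lop] at h ⊢

/-- Scalar extraction: `L(z) = z^{b-j} • L(1)` (at `q = 0`), for every pattern. -/
lemma Lop_scal (z : ℂ) (hz : z ≠ 0) (a b i j : Bool) :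
    Lop 0 z a b i j =
      (((Units.mk0 z hz) ^ ((bv b : ℤ) - (bv j : ℤ)) : ℂˣ) : ℂ) • Lop 0 1 a b i j := by
  cases a <;> cases b <;> cases i <;> cases j <;>
    simp [Lop, bv, smul_smul, Units.val_mk0, zpow_sub₀ hz]

lemma zpow_sum_units (u : ℂˣ) {ι : Type*} (s : Finset ι) (f : ι → ℤ) :
    u ^ (∑ x ∈ s, f x) = ∏ x ∈ s, u ^ f x := by
  classical
  induction s using Finset.induction with
  | empty => simp
  | insert a s' hx ih => simp [Finset.sum_insert hx, Finset.prod_insert hx, zpow_add, ih]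

/-- A `PiTensorProduct.map` of a family containing a zero operator is zero. -/
lemma PTmap_eq_zero {ι : Type} (f : ι → Module.End ℂ FockSp) (d : ι) (hd : f d = 0) :
    (PiTensorProduct.map f : Module.End ℂ (FT ι)) = 0 := by
  ext x
  simp only [PiTensorProduct.map_tprod, LinearMap.compMultilinearMap_apply, LinearMap.zero_apply]
  exact MultilinearMap.map_coord_zero _ d (by simp [hd])

/-- Scalar extraction for `PiTensorProduct.map`. -/
lemma PTmap_smul_family {ι : Type} [Fintype ι] (c : ι → ℂ) (f g : ι → Module.End ℂ FockSp)
    (h : ∀ d, f d = c d • g d) :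
    (PiTensorProduct.map f : Module.End ℂ (FT ι)) = (∏ d, c d) • PiTensorProduct.map g := by
  ext x
  simp only [PiTensorProduct.map_tprod, LinearMap.compMultilinearMap_apply,
    LinearMap.smul_apply, h, LinearMap.smul_apply]
  exact MultilinearMap.map_smul_univ _ c fun i => g i (x i)

/-- Conjugating a tensor product of two `PiTensorProduct.map`s by `gridSplit`. -/
lemma gridSplit_conj (n : ℕ) (F : DeltaT n → Module.End ℂ FockSp)
    (G : DeltaC n → Module.End ℂ FockSp) :
    (gridSplit n).toLinearMap ∘ₗ
        TensorProduct.map (PiTensorProduct.map F) (PiTensorProduct.map G) ∘ₗ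
          (gridSplit n).symm.toLinearMap =
      PiTensorProduct.map (fun rc => if h : pDel n rc then F ⟨rc, h⟩ else G ⟨rc, h⟩) := by
  have key : ∀ xy : (FT (DeltaT n) ⊗[ℂ] FT (DeltaC n)),
      (gridSplit n) (TensorProduct.map (PiTensorProduct.map F) (PiTensorProduct.map G) xy)
        = PiTensorProduct.map (fun rc => if h : pDel n rc then F ⟨rc, h⟩ else G ⟨rc, h⟩)
            ((gridSplit n) xy) := by
    intro xy
    induction xy using TensorProduct.induction_on with
    | zero => simp
    | add x y hx hy => simp [map_add, hx, hy]
    | tmul x y =>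
      induction x using PiTensorProduct.induction_on with
      | add x₁ x₂ h₁ h₂ =>
        rw [TensorProduct.add_tmul]; simp only [map_add, h₁, h₂]
      | smul_tprod r f =>
        induction y using PiTensorProduct.induction_on with
        | add y₁ y₂ h₁ h₂ =>
          rw [TensorProduct.tmul_add]; simp only [map_add, h₁, h₂]
        | smul_tprod s g =>
          rw [TensorProduct.tmul_smul, ← TensorProduct.smul_tmul']
          simp only [map_smul]
          congr 1
          congr 1
          rw [TensorProduct.map_tmul]
          simp only [PiTensorProduct.map_tprod, gridSplit, LinearEquiv.trans_apply,
            PiTensorProduct.tmulEquiv_apply, PiTensorProduct.reindex_tprod]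
          congr 1
          funext rc
          by_cases h : pDel n rc
          · rw [Equiv.sumCompl_symm_apply_of_pos h]
            simp [h]
          · rw [Equiv.sumCompl_symm_apply_of_neg h]
            simp [h]
  apply LinearMap.ext
  intro w
  have := key ((gridSplit n).symm w)
  simpa using this

end Aux
section Aux2

open Finset

/-- the local family of grid weights -/
def gridFam (n : ℕ) (z : ℂ) (H : Fin n → Fin (n + 1) → Bool) (V : Fin (n + 1) → Fin n → Bool) :
    Fin n × Fin n → Module.End ℂ FockSp :=
  fun rc => Lop 0 z (H rc.1 rc.2.succ) (V rc.1.castSucc rc.2) (H rc.1 rc.2.castSucc)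
    (V rc.1.succ rc.2)

/-- single grid-configuration contribution to `z • S(z)` -/
def Gterm (n : ℕ) (z : ℂ)
    (HV : (Fin n → Fin (n + 1) → Bool) × (Fin (n + 1) → Fin n → Bool)) :
    Module.End ℂ (FT (Fin n × Fin n)) :=
  if (∀ r, HV.1 r (Fin.last n) = (r.val == 0)) ∧ (∀ c, HV.2 (Fin.last n) c = (c.val == 0)) then
    z • PiTensorProduct.map (gridFam n z HV.1 HV.2)
  else 0

/-- the `B`-family of local operators -/
def BFam (n i : ℕ) : DeltaC n → Module.End ℂ FockSp := fun d =>
  if d.1.1.val + d.1.2.val + 1 = n then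
    (if d.1.2.val + 1 ≤ i then 1 else aMinus 0)
  else if d.1.1.val + d.1.2.val = n then aPlus
  else 1

lemma Bop_eq (n i : ℕ) : Bop n i = PiTensorProduct.map (BFam n i) := rfl

/-- the combined family on the whole grid -/
def combFam (n i : ℕ) (hX vX : Fin (n + 2) → Fin (n + 2) → Bool) :
    Fin n × Fin n → Module.End ℂ FockSp :=
  fun rc => if h : pDel n rc then Xweight n hX vX ⟨rc, h⟩ else BFam n i ⟨rc, h⟩

/-- single `X`-configuration contribution to the right-hand side -/
def gterm (n : ℕ) (z : ℂ)
    (x : ℕ × ((Fin (n + 2) → Fin (n + 2) → Bool) × (Fin (n + 2) → Fin (n + 2) → Bool))) :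
    Module.End ℂ (FT (Fin n × Fin n)) :=
  if Xbc n x.1 x.2.1 x.2.2 then
    z ^ Xexp n x.2.2 • PiTensorProduct.map (combFam n x.1 x.2.1 x.2.2)
  else 0

/-- canonical horizontal grid configuration -/
def PhiH (n i : ℕ) (hX : Fin (n + 2) → Fin (n + 2) → Bool) : Fin n → Fin (n + 1) → Bool :=
  fun r k =>
    if r.val + k.val + 2 ≤ n then hX (↑(r.val + 1)) (↑(k.val + 1))
    else if r.val + k.val + 1 = n then theta n i (r.val + 1)
    else decide (r.val + k.val = n)

/-- canonical vertical grid configuration -/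
def PhiV (n i : ℕ) (vX : Fin (n + 2) → Fin (n + 2) → Bool) : Fin (n + 1) → Fin n → Bool :=
  fun p c =>
    if p.val + c.val + 2 ≤ n then vX (↑(p.val + 1)) (↑(c.val + 1))
    else if p.val + c.val + 1 = n then theta n i (p.val + 1)
    else decide (p.val + c.val = n)

lemma theta_true_iff (n i R : ℕ) : theta n i R = true ↔ n - i < R := by
  simp [theta]

lemma theta_inj {n i i' : ℕ} (hi : i ≤ n) (hi' : i' ≤ n)
    (h : ∀ R, 1 ≤ R → R ≤ n → theta n i R = theta n i' R) : i = i' := by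
  by_contra hne
  rcases Nat.lt_or_ge i i' with hlt | hge
  · have h1 := h (n - i' + 1) (by omega) (by omega)
    have h2 : theta n i' (n - i' + 1) = true := by rw [theta_true_iff]; omega
    rw [h2, theta_true_iff] at h1; omega
  · have hlt : i' < i := by omega
    have h1 := h (n - i + 1) (by omega) (by omega)
    have h2 : theta n i (n - i + 1) = true := by rw [theta_true_iff]; omega
    rw [h2] at h1
    have := (theta_true_iff n i' _).mp h1.symm; omega

/-- a monotone boolean pattern is a theta pattern -/
lemma mono_theta {n : ℕ} (T : Fin n → Bool)
    (mono : ∀ r r' : Fin n, r ≤ r' → T r = true → T r' = true) (r : Fin n) :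
    T r = theta n (#{r ∈ univ | T r = true}) (r.val + 1) := by
  set i := #{r ∈ univ | T r = true} with hi
  rcases hT : T r with _ | _
  · -- T r = false : the true-set is contained in Ioi r
    have hsub : ({r ∈ univ | T r = true} : Finset (Fin n)) ⊆ Finset.Ioi r := by
      intro r' hr'
      simp only [Finset.mem_filter] at hr'
      rcases Nat.lt_or_ge r.val r'.val with h | h
      · exact Finset.mem_Ioi.mpr (by exact Fin.lt_def.mpr h)
      · exfalso
        have := mono r' r (by omega) hr'.2
        rw [hT] at this; exact Bool.false_ne_true this
    have hcard := Finset.card_le_card hsub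
    rw [Fin.card_Ioi] at hcard
    have hr := r.isLt
    symm
    rw [Bool.eq_false_iff, Ne, theta_true_iff]
    omega
  · have hsub : Finset.Ici r ⊆ ({r ∈ univ | T r = true} : Finset (Fin n)) := by
      intro r' hr'
      simp only [Finset.mem_filter, Finset.mem_univ, true_and]
      exact mono r r' (Finset.mem_Ici.mp hr') hT
    have hcard := Finset.card_le_card hsub
    rw [Fin.card_Ici] at hcard
    have hr := r.isLt
    symm
    rw [theta_true_iff]
    omega

end Aux2
section Forcing

variable {n : ℕ} {z : ℂ} {H : Fin n → Fin (n + 1) → Bool} {V : Fin (n + 1) → Fin n → Bool}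

lemma vert_ne (hNZ : ∀ rc : Fin n × Fin n, gridFam n z H V rc ≠ 0)
    {r c : ℕ} (hr : r < n) (hc : c < n) :
    Lop 0 z (H ⟨r, hr⟩ ⟨c + 1, by omega⟩) (V ⟨r, by omega⟩ ⟨c, hc⟩)
      (H ⟨r, hr⟩ ⟨c, by omega⟩) (V ⟨r + 1, by omega⟩ ⟨c, hc⟩) ≠ 0 := by
  have h := hNZ (⟨r, hr⟩, ⟨c, hc⟩)
  simpa [gridFam, Fin.succ_mk, Fin.castSucc_mk] using h

lemma forceZero (hbcH : ∀ r, H r (Fin.last n) = (r.val == 0))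
    (hbcV : ∀ c, V (Fin.last n) c = (c.val == 0))
    (hNZ : ∀ rc : Fin n × Fin n, gridFam n z H V rc ≠ 0) :
    ∀ d : ℕ,
      (∀ r k (hr : r < n) (hk : k < n + 1), n ≤ d + r → n + 1 ≤ r + k →
        H ⟨r, hr⟩ ⟨k, hk⟩ = false) ∧
      (∀ p c (hp : p < n + 1) (hc : c < n), n ≤ d + p → n + 1 ≤ p + c →
        V ⟨p, hp⟩ ⟨c, hc⟩ = false) := by
  intro d
  induction d with
  | zero =>
    constructor
    · intro r k hr hk hd hs; omega
    · intro p c hp hc hd hs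
      have hpl : (⟨p, hp⟩ : Fin (n + 1)) = Fin.last n := Fin.ext (by simp; omega)
      rw [hpl, hbcV]
      simp only [beq_eq_false_iff_ne, ne_eq]
      omega
  | succ d ih =>
    have hH : ∀ r k (hr : r < n) (hk : k < n + 1), n ≤ (d + 1) + r → n + 1 ≤ r + k →
        H ⟨r, hr⟩ ⟨k, hk⟩ = false := by
      intro r k hr hk hd hs
      by_cases hkn : k = n
      · have hkl : (⟨k, hk⟩ : Fin (n + 1)) = Fin.last n := Fin.ext (by simp [hkn])
        rw [hkl, hbcH]
        simp only [beq_eq_false_iff_ne, ne_eq]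
        omega
      · have hc : k - 1 < n := by omega
        have hv := vert_ne hNZ hr hc
        have e1 : (⟨k - 1 + 1, by omega⟩ : Fin (n + 1)) = ⟨k, hk⟩ := Fin.ext (by simp; omega)
        rw [e1] at hv
        by_contra hA
        have hA' : H ⟨r, hr⟩ ⟨k, hk⟩ = true := by
          revert hA; cases H ⟨r, hr⟩ ⟨k, hk⟩ <;> simp
        have hJ : V ⟨r + 1, by omega⟩ ⟨k - 1, hc⟩ = false :=
          ih.2 (r + 1) (k - 1) (by omega) hc (by omega) (by omega)
        rw [hA', hJ, Lop_a_true_j_false] at hv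
        exact hv rfl
    refine ⟨hH, ?_⟩
    intro p c hp hc hd hs
    by_cases hpn : p = n
    · have hpl : (⟨p, hp⟩ : Fin (n + 1)) = Fin.last n := Fin.ext (by simp [hpn])
      rw [hpl, hbcV]
      simp only [beq_eq_false_iff_ne, ne_eq]
      omega
    · have hp' : p < n := by omega
      have hv := vert_ne hNZ hp' hc
      by_contra hB
      have hB' : V ⟨p, hp⟩ ⟨c, hc⟩ = true := by
        revert hB; cases V ⟨p, hp⟩ ⟨c, hc⟩ <;> simp
      have e1 : (⟨p, by omega⟩ : Fin (n + 1)) = ⟨p, hp⟩ := rfl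
      have hI : H ⟨p, hp'⟩ ⟨c, by omega⟩ = false :=
        hH p c hp' (by omega) (by omega) (by omega)
      have hJ : V ⟨p + 1, by omega⟩ ⟨c, hc⟩ = false :=
        ih.2 (p + 1) c (by omega) hc (by omega) (by omega)
      rw [e1, hB', hI, hJ, Lop_b_true_i_false_j_false] at hv
      exact hv rfl

lemma forceH0 (hbcH : ∀ r, H r (Fin.last n) = (r.val == 0))
    (hbcV : ∀ c, V (Fin.last n) c = (c.val == 0))
    (hNZ : ∀ rc : Fin n × Fin n, gridFam n z H V rc ≠ 0)
    {r k : ℕ} (hr : r < n) (hk : k < n + 1) (hs : n + 1 ≤ r + k) :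
    H ⟨r, hr⟩ ⟨k, hk⟩ = false :=
  (forceZero hbcH hbcV hNZ (n + 1)).1 r k hr hk (by omega) hs

lemma forceV0 (hbcH : ∀ r, H r (Fin.last n) = (r.val == 0))
    (hbcV : ∀ c, V (Fin.last n) c = (c.val == 0))
    (hNZ : ∀ rc : Fin n × Fin n, gridFam n z H V rc ≠ 0)
    {p c : ℕ} (hp : p < n + 1) (hc : c < n) (hs : n + 1 ≤ p + c) :
    V ⟨p, hp⟩ ⟨c, hc⟩ = false :=
  (forceZero hbcH hbcV hNZ (n + 1)).2 p c hp hc (by omega) hs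

lemma forceChain (hbcH : ∀ r, H r (Fin.last n) = (r.val == 0))
    (hbcV : ∀ c, V (Fin.last n) c = (c.val == 0))
    (hNZ : ∀ rc : Fin n × Fin n, gridFam n z H V rc ≠ 0) :
    ∀ m (hm : m < n),
      (∀ h1 : n - m < n + 1, H ⟨m, hm⟩ ⟨n - m, h1⟩ = true) ∧
      (∀ (h2 : m + 1 < n + 1) (h3 : n - 1 - m < n), V ⟨m + 1, h2⟩ ⟨n - 1 - m, h3⟩ = true) := by
  intro m
  induction m with
  | zero =>
    intro hm
    have ha : ∀ h1 : n - 0 < n + 1, H ⟨0, hm⟩ ⟨n - 0, h1⟩ = true := by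
      intro h1
      have hkl : (⟨n - 0, h1⟩ : Fin (n + 1)) = Fin.last n := Fin.ext (by simp)
      rw [hkl, hbcH]
      simp
    refine ⟨ha, ?_⟩
    intro h2 h3
    have hv := vert_ne hNZ hm h3
    have e1 : (⟨n - 1 - 0 + 1, by omega⟩ : Fin (n + 1)) = ⟨n - 0, by omega⟩ :=
      Fin.ext (by simp; omega)
    rw [e1, ha (by omega)] at hv
    by_contra hJ
    have hJ' : V ⟨0 + 1, by omega⟩ ⟨n - 1 - 0, h3⟩ = false := by
      revert hJ; cases V ⟨0 + 1, by omega⟩ ⟨n - 1 - 0, h3⟩ <;> simp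
    rw [hJ', Lop_a_true_j_false] at hv
    exact hv rfl
  | succ m ih =>
    intro hm
    obtain ⟨iha, ihj⟩ := ih (by omega)
    -- a_{m+1} from the D' vertex (m+1, n-1-m)
    have ha : ∀ h1 : n - (m + 1) < n + 1, H ⟨m + 1, hm⟩ ⟨n - (m + 1), h1⟩ = true := by
      intro h1
      have hc : n - 1 - m < n := by omega
      have hv := vert_ne hNZ hm hc
      -- top edge of this vertex is j_m = true
      have hB : V ⟨m + 1, by omega⟩ ⟨n - 1 - m, hc⟩ = true := ihj (by omega) hc
      -- right edge is 0 by forceZero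
      have hA : H ⟨m + 1, hm⟩ ⟨n - 1 - m + 1, by omega⟩ = false :=
        forceH0 hbcH hbcV hNZ hm (by omega) (by omega)
      -- bottom edge is 0 by forceZero
      have hJ : V ⟨m + 1 + 1, by omega⟩ ⟨n - 1 - m, hc⟩ = false :=
        forceV0 hbcH hbcV hNZ (by omega) hc (by omega)
      rw [hB, hA, hJ] at hv
      by_contra hI
      have hI' : H ⟨m + 1, hm⟩ ⟨n - (m + 1), h1⟩ = false := by
        revert hI; cases H ⟨m + 1, hm⟩ ⟨n - (m + 1), h1⟩ <;> simp
      have e1 : (⟨n - 1 - m, by omega⟩ : Fin (n + 1)) = ⟨n - (m + 1), h1⟩ :=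
        Fin.ext (by simp; omega)
      rw [e1, hI', Lop_b_true_i_false_j_false] at hv
      exact hv rfl
    refine ⟨ha, ?_⟩
    -- j_{m+1} from the D vertex (m+1, n-2-m)
    intro h2 h3
    have hc : n - 1 - (m + 1) < n := by omega
    have hv := vert_ne hNZ hm hc
    have e1 : (⟨n - 1 - (m + 1) + 1, by omega⟩ : Fin (n + 1)) = ⟨n - (m + 1), by omega⟩ :=
      Fin.ext (by simp; omega)
    rw [e1, ha (by omega)] at hv
    by_contra hJ
    have hJ' : V ⟨m + 1 + 1, by omega⟩ ⟨n - 1 - (m + 1), hc⟩ = false := by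
      revert hJ; cases V ⟨m + 1 + 1, by omega⟩ ⟨n - 1 - (m + 1), hc⟩ <;> simp
    rw [hJ', Lop_a_true_j_false] at hv
    exact hv rfl

/-- the anti-diagonal interface pattern -/
def Tof {n : ℕ} (V : Fin (n + 1) → Fin n → Bool) : Fin n → Bool :=
  fun r => V ⟨r.val, by omega⟩ ⟨n - 1 - r.val, by have := r.isLt; omega⟩

lemma tEq (hbcH : ∀ r, H r (Fin.last n) = (r.val == 0))
    (hbcV : ∀ c, V (Fin.last n) c = (c.val == 0))
    (hNZ : ∀ rc : Fin n × Fin n, gridFam n z H V rc ≠ 0)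
    {m : ℕ} (hm : m < n) (h3 : n - 1 - m < n) (h4 : m < n + 1) :
    H ⟨m, hm⟩ ⟨n - 1 - m, by omega⟩ = V ⟨m, h4⟩ ⟨n - 1 - m, h3⟩ := by
  have hv := vert_ne hNZ hm h3
  have e1 : (⟨n - 1 - m + 1, by omega⟩ : Fin (n + 1)) = ⟨n - m, by omega⟩ :=
    Fin.ext (by simp; omega)
  have hA : H ⟨m, hm⟩ ⟨n - m, by omega⟩ = true :=
    (forceChain hbcH hbcV hNZ m hm).1 (by omega)
  have hJ : V ⟨m + 1, by omega⟩ ⟨n - 1 - m, h3⟩ = true :=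
    (forceChain hbcH hbcV hNZ m hm).2 (by omega) h3
  rw [e1, hA, hJ] at hv
  exact Lop_diag hv

lemma tStep (hbcH : ∀ r, H r (Fin.last n) = (r.val == 0))
    (hbcV : ∀ c, V (Fin.last n) c = (c.val == 0))
    (hNZ : ∀ rc : Fin n × Fin n, gridFam n z H V rc ≠ 0)
    {m : ℕ} (hm : m + 1 < n) (h0 : m < n) :
    Tof V ⟨m, h0⟩ = true → Tof V ⟨m + 1, hm⟩ = true := by
  intro hT
  -- left edge of D vertex (m, n-1-m) equals t_m = true
  have hI : H ⟨m, h0⟩ ⟨n - 1 - m, by omega⟩ = true := by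
    rw [tEq hbcH hbcV hNZ h0 (by omega) (by omega)]
    exact hT
  -- vertex (m, n-2-m): right edge true forces bottom edge true
  have hc : n - 1 - (m + 1) < n := by omega
  have hv := vert_ne hNZ h0 hc
  have e1 : (⟨n - 1 - (m + 1) + 1, by omega⟩ : Fin (n + 1)) = ⟨n - 1 - m, by omega⟩ :=
    Fin.ext (by simp; omega)
  rw [e1, hI] at hv
  by_contra hJ
  have hJ' : V ⟨m + 1, by omega⟩ ⟨n - 1 - (m + 1), hc⟩ = false := by
    revert hJ
    have : Tof V ⟨m + 1, hm⟩ = V ⟨m + 1, by omega⟩ ⟨n - 1 - (m + 1), hc⟩ := rfl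
    rw [this]
    cases V ⟨m + 1, by omega⟩ ⟨n - 1 - (m + 1), hc⟩ <;> simp
  rw [hJ', Lop_a_true_j_false] at hv
  exact hv rfl

lemma tMono (hbcH : ∀ r, H r (Fin.last n) = (r.val == 0))
    (hbcV : ∀ c, V (Fin.last n) c = (c.val == 0))
    (hNZ : ∀ rc : Fin n × Fin n, gridFam n z H V rc ≠ 0) :
    ∀ r r' : Fin n, r ≤ r' → Tof V r = true → Tof V r' = true := by
  have step : ∀ k a (ha : a < n) (hk : a + k < n),
      Tof V ⟨a, ha⟩ = true → Tof V ⟨a + k, hk⟩ = true := by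
    intro k
    induction k with
    | zero => intro a ha hk h; exact h
    | succ k ih =>
      intro a ha hk h
      have : Tof V ⟨a + k, by omega⟩ = true := ih a ha (by omega) h
      have := tStep hbcH hbcV hNZ (show a + k + 1 < n by omega) (by omega) this
      convert this using 2
      rfl
  intro r r' hle hT
  have h1 : r' = (⟨r.val + (r'.val - r.val), by have := r'.isLt; omega⟩ : Fin n) :=
    Fin.ext (by simp; omega)
  rw [h1]
  exact step _ r.val r.isLt _ (by rwa [Fin.eta])

end Forcing
section Bridge

open Finset

lemma Phi_bcH (n i : ℕ) (hX : Fin (n + 2) → Fin (n + 2) → Bool) (r : Fin n) :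
    PhiH n i hX r (Fin.last n) = (r.val == 0) := by
  have hr := r.isLt
  simp only [PhiH, Fin.val_last]
  rw [if_neg (by omega), if_neg (by omega)]
  by_cases h : r.val = 0
  · simp [h]
  · rw [decide_eq_false (by omega)]
    exact (beq_eq_false_iff_ne.mpr h).symm

lemma Phi_bcV (n i : ℕ) (vX : Fin (n + 2) → Fin (n + 2) → Bool) (c : Fin n) :
    PhiV n i vX (Fin.last n) c = (c.val == 0) := by
  have hc := c.isLt
  simp only [PhiV, Fin.val_last]
  rw [if_neg (by omega), if_neg (by omega)]
  by_cases h : c.val = 0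
  · simp [h]
  · rw [decide_eq_false (by omega)]
    exact (beq_eq_false_iff_ne.mpr h).symm

lemma gridFam_Phi (n i : ℕ) (hi : i ≤ n) (z : ℂ) (hz : z ≠ 0)
    (hX vX : Fin (n + 2) → Fin (n + 2) → Bool) (hbc : Xbc n i hX vX)
    (rc : Fin n × Fin n) :
    gridFam n z (PhiH n i hX) (PhiV n i vX) rc =
      (((Units.mk0 z hz) ^
        ((bv (PhiV n i vX rc.1.castSucc rc.2) : ℤ) - (bv (PhiV n i vX rc.1.succ rc.2) : ℤ)) :
          ℂˣ) : ℂ) • combFam n i hX vX rc := by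
  obtain ⟨hdom, hdomv, hbc3, hbc4, hbc5⟩ := hbc
  have hr := rc.1.isLt
  have hc := rc.2.isLt
  rw [gridFam, Lop_scal z hz]
  congr 1
  by_cases h1 : rc.1.val + rc.2.val + 2 ≤ n
  · -- Δ region
    have vA : PhiH n i hX rc.1 rc.2.succ = hX (↑(rc.1.val + 1)) (↑(rc.2.val + 2)) := by
      simp only [PhiH, Fin.val_succ]
      by_cases h1' : rc.1.val + rc.2.val + 3 ≤ n
      · rw [if_pos (by omega)]
      · rw [if_neg (by omega), if_pos (by omega)]
        have h5 := hbc3 (rc.1.val + 1) (by omega) (by omega)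
        rw [show n - (rc.1.val + 1) + 1 = rc.2.val + 2 by omega] at h5
        exact h5.symm
    have vI : PhiH n i hX rc.1 rc.2.castSucc = hX (↑(rc.1.val + 1)) (↑(rc.2.val + 1)) := by
      simp only [PhiH, Fin.coe_castSucc]
      rw [if_pos h1]
    have vB : PhiV n i vX rc.1.castSucc rc.2 = vX (↑(rc.1.val + 1)) (↑(rc.2.val + 1)) := by
      simp only [PhiV, Fin.coe_castSucc]
      rw [if_pos h1]
    have vJ : PhiV n i vX rc.1.succ rc.2 = vX (↑(rc.1.val + 2)) (↑(rc.2.val + 1)) := by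
      simp only [PhiV, Fin.val_succ]
      by_cases h1' : rc.1.val + rc.2.val + 3 ≤ n
      · rw [if_pos (by omega)]
      · rw [if_neg (by omega), if_pos (by omega)]
        have h5 := hbc4 (rc.2.val + 1) (by omega) (by omega)
        rw [show n - (rc.2.val + 1) + 1 = rc.1.val + 2 by omega] at h5
        rw [show rc.1.val + 1 + 1 = rc.1.val + 2 from rfl]
        exact h5.symm
    rw [vA, vI, vB, vJ]
    have hcomb : combFam n i hX vX rc = Xweight n hX vX ⟨rc, h1⟩ := dif_pos h1
    rw [hcomb]
    rfl
  · have hpd : ¬ pDel n rc := fun hp =>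
      absurd (show rc.1.val + rc.2.val + 2 ≤ n from hp) (by omega)
    have hcomb : combFam n i hX vX rc =
        (if rc.1.val + rc.2.val + 1 = n then (if rc.2.val + 1 ≤ i then 1 else aMinus 0)
         else if rc.1.val + rc.2.val = n then aPlus else 1) := dif_neg hpd
    by_cases h2 : rc.1.val + rc.2.val + 1 = n
    · -- anti-diagonal D
      have vA : PhiH n i hX rc.1 rc.2.succ = true := by
        simp only [PhiH, Fin.val_succ]
        rw [if_neg (by omega), if_neg (by omega)]
        exact decide_eq_true (by omega)
      have vI : PhiH n i hX rc.1 rc.2.castSucc = theta n i (rc.1.val + 1) := by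
        simp only [PhiH, Fin.coe_castSucc]
        rw [if_neg (by omega), if_pos h2]
      have vB : PhiV n i vX rc.1.castSucc rc.2 = theta n i (rc.1.val + 1) := by
        simp only [PhiV, Fin.coe_castSucc]
        rw [if_neg (by omega), if_pos h2]
      have vJ : PhiV n i vX rc.1.succ rc.2 = true := by
        simp only [PhiV, Fin.val_succ]
        rw [if_neg (by omega), if_neg (by omega)]
        exact decide_eq_true (by omega)
      rw [vA, vI, vB, vJ, hcomb]
      simp only [if_pos h2]
      by_cases hci : rc.2.val + 1 ≤ i
      · rw [if_pos hci, show theta n i (rc.1.val + 1) = true from by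
          rw [theta_true_iff]; omega]
        simp [Lop]
      · rw [if_neg hci, show theta n i (rc.1.val + 1) = false from by
          simp only [theta, decide_eq_false_iff_not]; omega]
        simp [Lop]
    · by_cases h3 : rc.1.val + rc.2.val = n
      · -- sub-anti-diagonal D'
        have vA : PhiH n i hX rc.1 rc.2.succ = false := by
          simp only [PhiH, Fin.val_succ]
          rw [if_neg (by omega), if_neg (by omega)]
          exact decide_eq_false (by omega)
        have vI : PhiH n i hX rc.1 rc.2.castSucc = true := by
          simp only [PhiH, Fin.coe_castSucc]
          rw [if_neg (by omega), if_neg (by omega)]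
          exact decide_eq_true (by omega)
        have vB : PhiV n i vX rc.1.castSucc rc.2 = true := by
          simp only [PhiV, Fin.coe_castSucc]
          rw [if_neg (by omega), if_neg (by omega)]
          exact decide_eq_true (by omega)
        have vJ : PhiV n i vX rc.1.succ rc.2 = false := by
          simp only [PhiV, Fin.val_succ]
          rw [if_neg (by omega), if_neg (by omega)]
          exact decide_eq_false (by omega)
        rw [vA, vI, vB, vJ, hcomb]
        rw [if_neg (by omega), if_pos h3]
        simp [Lop]
      · -- deep region
        have vA : PhiH n i hX rc.1 rc.2.succ = false := by
          simp only [PhiH, Fin.val_succ]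
          rw [if_neg (by omega), if_neg (by omega)]
          exact decide_eq_false (by omega)
        have vI : PhiH n i hX rc.1 rc.2.castSucc = false := by
          simp only [PhiH, Fin.coe_castSucc]
          rw [if_neg (by omega), if_neg (by omega)]
          exact decide_eq_false (by omega)
        have vB : PhiV n i vX rc.1.castSucc rc.2 = false := by
          simp only [PhiV, Fin.coe_castSucc]
          rw [if_neg (by omega), if_neg (by omega)]
          exact decide_eq_false (by omega)
        have vJ : PhiV n i vX rc.1.succ rc.2 = false := by
          simp only [PhiV, Fin.val_succ]
          rw [if_neg (by omega), if_neg (by omega)]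
          exact decide_eq_false (by omega)
        rw [vA, vI, vB, vJ, hcomb]
        rw [if_neg (by omega), if_neg (by omega)]
        simp [Lop]

end Bridge
section Scalars

open Finset

lemma col_telescope {n : ℕ} (g : Fin (n + 1) → ℤ) :
    ∑ r : Fin n, (g r.castSucc - g r.succ) = g 0 - g (Fin.last n) := by
  set G : ℕ → ℤ := fun m => g ⟨min m n, by omega⟩ with hG
  have h1 : ∑ r : Fin n, (g r.castSucc - g r.succ) = ∑ r : Fin n, (G r.val - G (r.val + 1)) := by
    refine Finset.sum_congr rfl fun r _ => ?_
    have hr := r.isLt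
    have e1 : r.castSucc = (⟨min r.val n, by omega⟩ : Fin (n + 1)) :=
      Fin.ext (show r.castSucc.val = min r.val n by rw [Fin.coe_castSucc]; omega)
    have e2 : r.succ = (⟨min (r.val + 1) n, by omega⟩ : Fin (n + 1)) :=
      Fin.ext (show r.succ.val = min (r.val + 1) n by rw [Fin.val_succ]; omega)
    rw [e1, e2]
  have h2 : ∑ r : Fin n, (G r.val - G (r.val + 1)) = ∑ m ∈ range n, (G m - G (m + 1)) :=
    Fin.sum_univ_eq_sum_range (fun m => G m - G (m + 1)) n
  have h3 : ∑ m ∈ range n, (G m - G (m + 1)) = G 0 - G n := Finset.sum_range_sub' G n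
  have e3 : G 0 = g 0 := by
    rw [hG]
    exact congrArg g (Fin.ext (show min 0 n = (0 : Fin (n + 1)).val by simp))
  have e4 : G n = g (Fin.last n) := by
    rw [hG]
    exact congrArg g (Fin.ext (show min n n = (Fin.last n).val by simp))
  rw [h1, h2, h3, e3, e4]

lemma sum_PhiV_last {n i : ℕ} (hn : 1 ≤ n) (vX : Fin (n + 2) → Fin (n + 2) → Bool) :
    ∑ c : Fin n, (bv (PhiV n i vX (Fin.last n) c) : ℤ) = 1 := by
  have key : ∀ c : Fin n, (bv (PhiV n i vX (Fin.last n) c) : ℤ) =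
      if c.val = 0 then 1 else 0 := by
    intro c
    have hc := c.isLt
    simp only [PhiV, Fin.val_last]
    rw [if_neg (by omega), if_neg (by omega)]
    by_cases h : c.val = 0
    · rw [if_pos h, decide_eq_true (by omega)]
      rfl
    · rw [if_neg h, decide_eq_false (by omega)]
      rfl
  rw [Finset.sum_congr rfl fun c _ => key c]
  rw [Fin.sum_univ_eq_sum_range (fun m => if m = 0 then (1 : ℤ) else 0) n]
  rw [Finset.sum_ite_eq' (Finset.range n) 0 (fun _ => (1 : ℤ))]
  rw [if_pos (Finset.mem_range.mpr (by omega))]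

lemma sum_PhiV_zero {n i : ℕ} (hn : 1 ≤ n) (vX : Fin (n + 2) → Fin (n + 2) → Bool)
    (hbc5 : vX 1 (↑n : Fin (n + 2)) = theta n i 1) :
    ∑ c : Fin n, (bv (PhiV n i vX 0 c) : ℤ) = (Xexp n vX : ℤ) := by
  have key : ∀ c : Fin n, (bv (PhiV n i vX 0 c) : ℤ) = (bv (vX 1 (↑(c.val + 1))) : ℤ) := by
    intro c
    have hc := c.isLt
    simp only [PhiV]; rw [Fin.val_zero]
    by_cases h : c.val + 1 = n
    · rw [if_neg (by omega), if_pos (by omega)]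
      have e : vX 1 (↑(c.val + 1) : Fin (n + 2)) = theta n i (0 + 1) := by
        rw [show c.val + 1 = n from h, hbc5]
      rw [e]
    · rw [if_pos (by omega)]
      have e : (↑(0 + 1 : ℕ) : Fin (n + 2)) = 1 := by norm_num
      rw [e]
  rw [Finset.sum_congr rfl fun c _ => key c, Xexp, Nat.cast_sum]
  refine Finset.sum_nbij' (fun c => c.val + 1) (fun C => if h : 1 ≤ C ∧ C ≤ n then
      (⟨C - 1, by omega⟩ : Fin n) else ⟨0, by omega⟩) ?_ ?_ ?_ ?_ ?_
  · intro c _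
    have := c.isLt
    simp only [Finset.mem_Icc]
    omega
  · intro C hC
    exact Finset.mem_univ _
  · intro c _
    have hcl := c.isLt
    rw [dif_pos (show 1 ≤ c.val + 1 ∧ c.val + 1 ≤ n by omega)]
    exact Fin.ext (show c.val + 1 - 1 = c.val by omega)
  · intro C hC
    simp only [Finset.mem_Icc] at hC
    rw [dif_pos hC]
    exact (show C - 1 + 1 = C by omega)
  · intro c _
    rfl

lemma Gterm_Phi (n i : ℕ) (hn : 1 ≤ n) (hi : i ≤ n) (z : ℂ) (hz : z ≠ 0)
    (hX vX : Fin (n + 2) → Fin (n + 2) → Bool) (hbc : Xbc n i hX vX) :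
    Gterm n z (PhiH n i hX, PhiV n i vX) = gterm n z (i, (hX, vX)) := by
  set u : ℂˣ := Units.mk0 z hz with hu
  rw [Gterm, if_pos ⟨fun r => Phi_bcH n i hX r, fun c => Phi_bcV n i vX c⟩]
  rw [gterm, if_pos hbc]
  have hfam := PTmap_smul_family
    (fun rc : Fin n × Fin n => ((u ^
      ((bv (PhiV n i vX rc.1.castSucc rc.2) : ℤ) - (bv (PhiV n i vX rc.1.succ rc.2) : ℤ)) :
        ℂˣ) : ℂ))
    (gridFam n z (PhiH n i hX) (PhiV n i vX)) (combFam n i hX vX)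
    (fun rc => gridFam_Phi n i hi z hz hX vX hbc rc)
  rw [hfam, smul_smul]
  congr 1
  -- compute the scalar
  have hcoe : (∏ d : Fin n × Fin n, ((u ^
      ((bv (PhiV n i vX d.1.castSucc d.2) : ℤ) - (bv (PhiV n i vX d.1.succ d.2) : ℤ)) :
        ℂˣ) : ℂ))
      = ((u ^ (∑ d : Fin n × Fin n,
          ((bv (PhiV n i vX d.1.castSucc d.2) : ℤ) - (bv (PhiV n i vX d.1.succ d.2) : ℤ))) :
            ℂˣ) : ℂ) := by
    rw [zpow_sum_units]
    exact (map_prod (Units.coeHom ℂ) _ _).symm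
  rw [hcoe]
  have hsum : (∑ d : Fin n × Fin n,
      ((bv (PhiV n i vX d.1.castSucc d.2) : ℤ) - (bv (PhiV n i vX d.1.succ d.2) : ℤ)))
      = (Xexp n vX : ℤ) - 1 := by
    rw [Fintype.sum_prod_type_right]
    have hcol : ∀ c : Fin n, (∑ r : Fin n,
        ((bv (PhiV n i vX r.castSucc c) : ℤ) - (bv (PhiV n i vX r.succ c) : ℤ)))
        = (bv (PhiV n i vX 0 c) : ℤ) - (bv (PhiV n i vX (Fin.last n) c) : ℤ) :=
      fun c => col_telescope (fun p => (bv (PhiV n i vX p c) : ℤ))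
    rw [Finset.sum_congr rfl fun c _ => hcol c, Finset.sum_sub_distrib,
      sum_PhiV_zero hn vX hbc.2.2.2.2, sum_PhiV_last hn vX]
  rw [hsum]
  have hz1 : z = ((u : ℂˣ) : ℂ) := rfl
  rw [hz1, ← Units.val_mul]
  have : u * u ^ ((Xexp n vX : ℤ) - 1) = u ^ (Xexp n (i, hX, vX).2.2) := by
    have : u * u ^ ((Xexp n vX : ℤ) - 1) = u ^ (1 + ((Xexp n vX : ℤ) - 1)) := by
      rw [zpow_add u, zpow_one]
    rw [this, show (1 : ℤ) + ((Xexp n vX : ℤ) - 1) = ((Xexp n vX : ℕ) : ℤ) by ring,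
      zpow_natCast]
  rw [this, Units.val_pow_eq_pow_val]

end Scalars
section Reconstruct

open Finset

/-- extracted `X`-configuration (horizontal) -/
def hX0 (n : ℕ) (hn : 1 ≤ n) (H : Fin n → Fin (n + 1) → Bool) :
    Fin (n + 2) → Fin (n + 2) → Bool :=
  fun R C => if inHdom n R.val C.val then
    H ⟨min (R.val - 1) (n - 1), by omega⟩ ⟨min (C.val - 1) n, by omega⟩ else false

/-- extracted `X`-configuration (vertical) -/
def vX0 (n : ℕ) (hn : 1 ≤ n) (V : Fin (n + 1) → Fin n → Bool) :
    Fin (n + 2) → Fin (n + 2) → Bool :=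
  fun R C => if inVdom n R.val C.val then
    V ⟨min (R.val - 1) n, by omega⟩ ⟨min (C.val - 1) (n - 1), by omega⟩ else false

lemma reconstruct {n : ℕ} {z : ℂ} (hn : 1 ≤ n)
    {H : Fin n → Fin (n + 1) → Bool} {V : Fin (n + 1) → Fin n → Bool}
    (hbcH : ∀ r, H r (Fin.last n) = (r.val == 0))
    (hbcV : ∀ c, V (Fin.last n) c = (c.val == 0))
    (hNZ : ∀ rc : Fin n × Fin n, gridFam n z H V rc ≠ 0) :
    ∃ i, i ≤ n ∧ Xbc n i (hX0 n hn H) (vX0 n hn V) ∧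
      PhiH n i (hX0 n hn H) = H ∧ PhiV n i (vX0 n hn V) = V := by
  classical
  set i₀ : ℕ := #{r ∈ (univ : Finset (Fin n)) | Tof V r = true} with hi₀
  have hTof : ∀ r : Fin n, Tof V r = theta n i₀ (r.val + 1) :=
    mono_theta (Tof V) (tMono hbcH hbcV hNZ)
  have hi₀n : i₀ ≤ n := by
    rw [hi₀]
    calc #{r ∈ (univ : Finset (Fin n)) | Tof V r = true} ≤ #(univ : Finset (Fin n)) :=
          Finset.card_filter_le _ _
      _ = n := by simp
  refine ⟨i₀, hi₀n, ⟨?_, ?_, ?_, ?_, ?_⟩, ?_, ?_⟩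
  · intro R C h
    simp only [hX0]
    rw [if_neg h]
  · intro R C h
    simp only [vX0]
    rw [if_neg h]
  · -- h boundary condition
    intro R h1 h2
    simp only [hX0]
    have eR := Fin.val_cast_of_lt (show R < n + 2 by omega)
    have eC := Fin.val_cast_of_lt (show n - R + 1 < n + 2 by omega)
    rw [if_pos (show inHdom n ((R : Fin (n + 2))).val (((n - R + 1 : ℕ) : Fin (n + 2))).val from by
      rw [eR, eC]; exact ⟨h1, h2, by omega, by omega⟩)]
    rw [show (⟨min (((R : Fin (n + 2))).val - 1) (n - 1), by omega⟩ : Fin n)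
        = ⟨R - 1, by omega⟩ from
      Fin.ext (by show min (((R : Fin (n + 2))).val - 1) (n - 1) = R - 1; rw [eR]; omega),
      show (⟨min ((((n - R + 1 : ℕ) : Fin (n + 2))).val - 1) n, by omega⟩ : Fin (n + 1))
        = ⟨n - 1 - (R - 1), by omega⟩ from
      Fin.ext (by show min ((((n - R + 1 : ℕ) : Fin (n + 2))).val - 1) n = n - 1 - (R - 1)
                  rw [eC]; omega)]
    rw [tEq hbcH hbcV hNZ (show R - 1 < n by omega) (show n - 1 - (R - 1) < n by omega)
      (show R - 1 < n + 1 by omega)]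
    have h6 := hTof ⟨R - 1, by omega⟩
    rw [show (⟨R - 1, by omega⟩ : Fin n).val + 1 = R from by
      show R - 1 + 1 = R; omega] at h6
    exact h6
  · -- v boundary condition
    intro C h1 h2
    simp only [vX0]
    have eR := Fin.val_cast_of_lt (show n - C + 1 < n + 2 by omega)
    have eC := Fin.val_cast_of_lt (show C < n + 2 by omega)
    rw [if_pos (show inVdom n (((n - C + 1 : ℕ) : Fin (n + 2))).val ((C : Fin (n + 2))).val from by
      rw [eR, eC]; exact Or.inl ⟨h1, h2, by omega, by omega⟩)]
    rw [show (⟨min ((((n - C + 1 : ℕ) : Fin (n + 2))).val - 1) n, by omega⟩ : Fin (n + 1))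
        = ⟨n - C, by omega⟩ from
      Fin.ext (by show min ((((n - C + 1 : ℕ) : Fin (n + 2))).val - 1) n = n - C
                  rw [eR]; omega),
      show (⟨min (((C : Fin (n + 2))).val - 1) (n - 1), by omega⟩ : Fin n)
        = ⟨n - 1 - (n - C), by omega⟩ from
      Fin.ext (by show min (((C : Fin (n + 2))).val - 1) (n - 1) = n - 1 - (n - C)
                  rw [eC]; omega)]
    exact hTof ⟨n - C, by omega⟩
  · -- v(1,n) boundary condition
    simp only [vX0]
    have e1 : ((1 : Fin (n + 2))).val = 1 := rfl
    have eC := Fin.val_cast_of_lt (show n < n + 2 by omega)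
    rw [if_pos (show inVdom n ((1 : Fin (n + 2))).val (((n : ℕ) : Fin (n + 2))).val from by
      rw [e1, eC]; exact Or.inr ⟨rfl, rfl⟩)]
    rw [show (⟨min (((1 : Fin (n + 2))).val - 1) n, by omega⟩ : Fin (n + 1))
        = ⟨0, by omega⟩ from
      Fin.ext (by show min (((1 : Fin (n + 2))).val - 1) n = 0; rw [e1]; omega),
      show (⟨min ((((n : ℕ) : Fin (n + 2))).val - 1) (n - 1), by omega⟩ : Fin n)
        = ⟨n - 1 - 0, by omega⟩ from
      Fin.ext (by show min ((((n : ℕ) : Fin (n + 2))).val - 1) (n - 1) = n - 1 - 0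
                  rw [eC]; omega)]
    exact hTof ⟨0, by omega⟩
  · -- PhiH = H
    funext r k
    have hr := r.isLt
    have hk := k.isLt
    simp only [PhiH]
    by_cases h1 : r.val + k.val + 2 ≤ n
    · rw [if_pos h1]
      simp only [hX0]
      have eR := Fin.val_cast_of_lt (show r.val + 1 < n + 2 by omega)
      have eC := Fin.val_cast_of_lt (show k.val + 1 < n + 2 by omega)
      rw [if_pos (show inHdom n (((r.val + 1 : ℕ) : Fin (n + 2))).val
          (((k.val + 1 : ℕ) : Fin (n + 2))).val from by
        rw [eR, eC]; exact ⟨by omega, by omega, by omega, by omega⟩)]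
      rw [show (⟨min ((((r.val + 1 : ℕ) : Fin (n + 2))).val - 1) (n - 1), by omega⟩ : Fin n)
          = r from
        Fin.ext (by show min ((((r.val + 1 : ℕ) : Fin (n + 2))).val - 1) (n - 1) = r.val
                    rw [eR]; omega),
        show (⟨min ((((k.val + 1 : ℕ) : Fin (n + 2))).val - 1) n, by omega⟩ : Fin (n + 1))
          = k from
        Fin.ext (by show min ((((k.val + 1 : ℕ) : Fin (n + 2))).val - 1) n = k.val
                    rw [eC]; omega)]
    · by_cases h2 : r.val + k.val + 1 = n
      · rw [if_neg h1, if_pos h2]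
        rw [show k = (⟨n - 1 - r.val, by omega⟩ : Fin (n + 1)) from
          Fin.ext (show k.val = n - 1 - r.val by omega)]
        have h6 := hTof r
        rw [← h6]
        exact (tEq hbcH hbcV hNZ r.isLt (by omega) (by omega)).symm
      · by_cases h3 : r.val + k.val = n
        · rw [if_neg h1, if_neg h2, decide_eq_true h3]
          rw [show k = (⟨n - r.val, by omega⟩ : Fin (n + 1)) from
            Fin.ext (show k.val = n - r.val by omega)]
          exact ((forceChain hbcH hbcV hNZ r.val r.isLt).1 (by omega)).symm
        · rw [if_neg h1, if_neg h2, decide_eq_false h3]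
          exact (forceH0 hbcH hbcV hNZ r.isLt k.isLt (by omega)).symm
  · -- PhiV = V
    funext p c
    have hp := p.isLt
    have hc := c.isLt
    simp only [PhiV]
    by_cases h1 : p.val + c.val + 2 ≤ n
    · rw [if_pos h1]
      simp only [vX0]
      have eR := Fin.val_cast_of_lt (show p.val + 1 < n + 2 by omega)
      have eC := Fin.val_cast_of_lt (show c.val + 1 < n + 2 by omega)
      rw [if_pos (show inVdom n (((p.val + 1 : ℕ) : Fin (n + 2))).val
          (((c.val + 1 : ℕ) : Fin (n + 2))).val from by
        rw [eR, eC]; exact Or.inl ⟨by omega, by omega, by omega, by omega⟩)]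
      rw [show (⟨min ((((p.val + 1 : ℕ) : Fin (n + 2))).val - 1) n, by omega⟩ : Fin (n + 1))
          = p from
        Fin.ext (by show min ((((p.val + 1 : ℕ) : Fin (n + 2))).val - 1) n = p.val
                    rw [eR]; omega),
        show (⟨min ((((c.val + 1 : ℕ) : Fin (n + 2))).val - 1) (n - 1), by omega⟩ : Fin n)
          = c from
        Fin.ext (by show min ((((c.val + 1 : ℕ) : Fin (n + 2))).val - 1) (n - 1) = c.val
                    rw [eC]; omega)]
    · by_cases h2 : p.val + c.val + 1 = n
      · rw [if_neg h1, if_pos h2]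
        have hpn : p.val < n := by omega
        have h6 := hTof ⟨p.val, hpn⟩
        have h7 : Tof V ⟨p.val, hpn⟩ = V p c := by
          rw [show c = (⟨n - 1 - p.val, by omega⟩ : Fin n) from
            Fin.ext (show c.val = n - 1 - p.val by omega)]
          rfl
        exact (h6.symm.trans h7)
      · by_cases h3 : p.val + c.val = n
        · rw [if_neg h1, if_neg h2, decide_eq_true h3]
          have hp1 : 1 ≤ p.val := by omega
          have hFC := (forceChain hbcH hbcV hNZ (p.val - 1) (by omega)).2 (by omega) (by omega)
          rw [show (⟨p.val - 1 + 1, by omega⟩ : Fin (n + 1)) = p from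
            Fin.ext (show p.val - 1 + 1 = p.val by omega),
            show (⟨n - 1 - (p.val - 1), by omega⟩ : Fin n) = c from
            Fin.ext (show n - 1 - (p.val - 1) = c.val by omega)] at hFC
          exact hFC.symm
        · rw [if_neg h1, if_neg h2, decide_eq_false h3]
          exact (forceV0 hbcH hbcV hNZ p.isLt c.isLt (by omega)).symm

end Reconstruct
section Inj

lemma Phi_inj (n : ℕ) (hn : 1 ≤ n) {i i' : ℕ} (hi : i ≤ n) (hi' : i' ≤ n)
    {hX vX hX' vX' : Fin (n + 2) → Fin (n + 2) → Bool}
    (hbc : Xbc n i hX vX) (hbc' : Xbc n i' hX' vX')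
    (hH : PhiH n i hX = PhiH n i' hX') (hV : PhiV n i vX = PhiV n i' vX') :
    i = i' ∧ hX = hX' ∧ vX = vX' := by
  obtain ⟨hdom, hdomv, hbc3, hbc4, hbc5⟩ := hbc
  obtain ⟨hdom', hdomv', hbc3', hbc4', hbc5'⟩ := hbc'
  have hii : i = i' := by
    refine theta_inj hi hi' fun R h1 h2 => ?_
    have h5 := congrFun (congrFun hH ⟨R - 1, by omega⟩) ⟨n - R, by omega⟩
    simp only [PhiH] at h5
    rw [if_neg (show ¬(R - 1 + (n - R) + 2 ≤ n) by omega),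
      if_neg (show ¬(R - 1 + (n - R) + 2 ≤ n) by omega),
      if_pos (show R - 1 + (n - R) + 1 = n by omega),
      if_pos (show R - 1 + (n - R) + 1 = n by omega)] at h5
    rw [show R - 1 + 1 = R by omega] at h5
    exact h5
  subst hii
  refine ⟨rfl, ?_, ?_⟩
  · funext R C
    by_cases hd : inHdom n R.val C.val
    · obtain ⟨d1, d2, d3, d4⟩ := hd
      have hR2 : R.val < n + 2 := R.isLt
      have hC2 : C.val < n + 2 := C.isLt
      by_cases hCb : C.val ≤ n - R.val
      · -- interior
        have h5 := congrFun (congrFun hH ⟨R.val - 1, by omega⟩) ⟨C.val - 1, by omega⟩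
        simp only [PhiH] at h5
        rw [if_pos (show R.val - 1 + (C.val - 1) + 2 ≤ n by omega),
          if_pos (show R.val - 1 + (C.val - 1) + 2 ≤ n by omega)] at h5
        rw [show R.val - 1 + 1 = R.val by omega, show C.val - 1 + 1 = C.val by omega,
          Fin.cast_val_eq_self, Fin.cast_val_eq_self] at h5
        exact h5
      · -- boundary column C = n - R + 1
        have e3 := hbc3 R.val (by omega) (by omega)
        have e3' := hbc3' R.val (by omega) (by omega)
        have eR : ((R.val : ℕ) : Fin (n + 2)) = R := Fin.cast_val_eq_self R
        have eC : ((n - R.val + 1 : ℕ) : Fin (n + 2)) = C := by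
          rw [show n - R.val + 1 = C.val by omega]
          exact Fin.cast_val_eq_self C
        rw [eR, eC] at e3 e3'
        rw [e3, e3']
    · rw [hdom R C hd, hdom' R C hd]
  · funext R C
    by_cases hd : inVdom n R.val C.val
    · have hR2 : R.val < n + 2 := R.isLt
      have hC2 : C.val < n + 2 := C.isLt
      rcases hd with ⟨d1, d2, d3, d4⟩ | ⟨d1, d2⟩
      · by_cases hRb : R.val ≤ n - C.val
        · -- interior
          have h5 := congrFun (congrFun hV ⟨R.val - 1, by omega⟩) ⟨C.val - 1, by omega⟩
          simp only [PhiV] at h5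
          rw [if_pos (show R.val - 1 + (C.val - 1) + 2 ≤ n by omega),
            if_pos (show R.val - 1 + (C.val - 1) + 2 ≤ n by omega)] at h5
          rw [show R.val - 1 + 1 = R.val by omega, show C.val - 1 + 1 = C.val by omega,
            Fin.cast_val_eq_self, Fin.cast_val_eq_self] at h5
          exact h5
        · -- boundary row R = n - C + 1
          have e4 := hbc4 C.val d1 d2
          have e4' := hbc4' C.val d1 d2
          have eC : ((C.val : ℕ) : Fin (n + 2)) = C := Fin.cast_val_eq_self C
          have eR : ((n - C.val + 1 : ℕ) : Fin (n + 2)) = R := by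
            rw [show n - C.val + 1 = R.val by omega]
            exact Fin.cast_val_eq_self R
          rw [eC, eR] at e4 e4'
          rw [e4, e4']
      · -- the point (1, n)
        have eR : R = (1 : Fin (n + 2)) := Fin.ext (by rw [d1]; rfl)
        have eC : C = ((n : ℕ) : Fin (n + 2)) := Fin.ext (by
          rw [d2, Fin.val_cast_of_lt (show n < n + 2 by omega)])
        rw [eR, eC, hbc5, hbc5']
    · rw [hdomv R C hd, hdomv' R C hd]

end Inj
section MainAux

open Finset

lemma TPmap_sum_left {M N : Type*} [AddCommMonoid M] [Module ℂ M] [AddCommMonoid N]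
    [Module ℂ N] {ι : Type*} (s : Finset ι) (f : ι → (M →ₗ[ℂ] M)) (g : N →ₗ[ℂ] N) :
    TensorProduct.map (∑ x ∈ s, f x) g = ∑ x ∈ s, TensorProduct.map (f x) g := by
  classical
  induction s using Finset.induction with
  | empty => simp [TensorProduct.map_zero_left]
  | insert a s' hx ih =>
    rw [Finset.sum_insert hx, Finset.sum_insert hx, TensorProduct.map_add_left, ih]

lemma comp_sum_comp {M₁ M₂ M₃ M₄ : Type*}
    [AddCommMonoid M₁] [AddCommMonoid M₂] [AddCommMonoid M₃] [AddCommMonoid M₄]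
    [Module ℂ M₁] [Module ℂ M₂] [Module ℂ M₃] [Module ℂ M₄]
    {ι : Type*} (s : Finset ι) (A : M₃ →ₗ[ℂ] M₄) (f : ι → (M₂ →ₗ[ℂ] M₃)) (B : M₁ →ₗ[ℂ] M₂) :
    A ∘ₗ (∑ x ∈ s, f x) ∘ₗ B = ∑ x ∈ s, (A ∘ₗ f x ∘ₗ B) := by
  ext w
  simp [LinearMap.sum_apply, map_sum]

lemma sum_swap4 {α β γ δ M : Type*} [AddCommMonoid M] [Fintype α] [Fintype β] [Fintype γ]
    [Fintype δ] (F : α → β → γ → δ → M) :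
    (∑ i : α, ∑ b : β, ∑ h : γ, ∑ v : δ, F i b h v)
      = ∑ h : γ, ∑ v : δ, ∑ i : α, ∑ b : β, F i b h v := by
  calc (∑ i : α, ∑ b : β, ∑ h : γ, ∑ v : δ, F i b h v)
      = ∑ i : α, ∑ h : γ, ∑ b : β, ∑ v : δ, F i b h v :=
        Finset.sum_congr rfl fun i _ => Finset.sum_comm
    _ = ∑ h : γ, ∑ i : α, ∑ b : β, ∑ v : δ, F i b h v := Finset.sum_comm
    _ = ∑ h : γ, ∑ i : α, ∑ v : δ, ∑ b : β, F i b h v :=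
        Finset.sum_congr rfl fun h _ => Finset.sum_congr rfl fun i _ => Finset.sum_comm
    _ = ∑ h : γ, ∑ v : δ, ∑ i : α, ∑ b : β, F i b h v :=
        Finset.sum_congr rfl fun h _ => Finset.sum_comm

lemma collapse_ib {n : ℕ} (M : Module.End ℂ (FT (Fin n × Fin n)))
    (h : Fin n → Fin (n + 1) → Bool) (v : Fin (n + 1) → Fin n → Bool)
    (a : Fin n → Bool) (j : Fin n → Bool) :
    (∑ i : Fin n → Bool, ∑ b : Fin n → Bool,
      if (∀ r, h r 0 = i r) ∧ (∀ r, h r (Fin.last n) = a r) ∧ (∀ c, v 0 c = b c) ∧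
          (∀ c, v (Fin.last n) c = j c) then M else 0)
      = if (∀ r, h r (Fin.last n) = a r) ∧ (∀ c, v (Fin.last n) c = j c) then M else 0 := by
  classical
  by_cases h2 : (∀ r, h r (Fin.last n) = a r)
  · by_cases h4 : (∀ c, v (Fin.last n) c = j c)
    · rw [if_pos ⟨h2, h4⟩]
      have e1 : (∑ i : Fin n → Bool, ∑ b : Fin n → Bool,
          if (∀ r, h r 0 = i r) ∧ (∀ r, h r (Fin.last n) = a r) ∧ (∀ c, v 0 c = b c) ∧
              (∀ c, v (Fin.last n) c = j c) then M else 0)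
          = ∑ b : Fin n → Bool,
            if (∀ r, h r 0 = (fun r => h r 0) r) ∧ (∀ r, h r (Fin.last n) = a r) ∧
                (∀ c, v 0 c = b c) ∧ (∀ c, v (Fin.last n) c = j c) then M else 0 := by
        refine Finset.sum_eq_single (fun r => h r 0) (fun i _ hi => ?_)
          (fun hmem => absurd (Finset.mem_univ _) hmem)
        refine Finset.sum_eq_zero fun b _ => ?_
        rw [if_neg]
        rintro ⟨h1, -, -, -⟩
        exact hi (funext fun r => (h1 r).symm)
      rw [e1]
      have e2 : (∑ b : Fin n → Bool,
          if (∀ r, h r 0 = (fun r => h r 0) r) ∧ (∀ r, h r (Fin.last n) = a r) ∧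
              (∀ c, v 0 c = b c) ∧ (∀ c, v (Fin.last n) c = j c) then M else 0)
          = if (∀ r, h r 0 = (fun r => h r 0) r) ∧ (∀ r, h r (Fin.last n) = a r) ∧
              (∀ c, v 0 c = (fun c => v 0 c) c) ∧ (∀ c, v (Fin.last n) c = j c) then M
            else 0 := by
        refine Finset.sum_eq_single (fun c => v 0 c) (fun b _ hb => ?_)
          (fun hmem => absurd (Finset.mem_univ _) hmem)
        rw [if_neg]
        rintro ⟨-, -, h3, -⟩
        exact hb (funext fun c => (h3 c).symm)
      rw [e2, if_pos ⟨fun r => rfl, h2, fun c => rfl, h4⟩]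
    · rw [if_neg (fun hc => h4 hc.2)]
      refine Finset.sum_eq_zero fun i _ => Finset.sum_eq_zero fun b _ => ?_
      rw [if_neg]
      rintro ⟨-, -, -, h4'⟩
      exact h4 h4'
  · rw [if_neg (fun hc => h2 hc.1)]
    refine Finset.sum_eq_zero fun i _ => Finset.sum_eq_zero fun b _ => ?_
    rw [if_neg]
    rintro ⟨-, h2', -, -⟩
    exact h2 h2'

end MainAux
/-- at `q = 0`, `z·S(z)^{(1,0,…,0)}_{(1,0,…,0)} = ∑_{i=0}^n X_i(z) ⊗ B_i`
under the identification of `F^{⊗n²}` with `F^{⊗Δ} ⊗ F^{⊗Δᶜ}`. -/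
theorem S_expansion_10 (n : ℕ) (hn : 1 ≤ n) (z : ℂ) (hz : z ≠ 0) :
    z • Smat 0 z n n (fun r => r.val == 0) (fun c => c.val == 0) =
      ∑ i ∈ Finset.range (n + 1),
        (gridSplit n).toLinearMap ∘ₗ
          TensorProduct.map (Xop n i z) (Bop n i) ∘ₗ (gridSplit n).symm.toLinearMap := by
  classical
  have lhs_eq : z • Smat 0 z n n (fun r => r.val == 0) (fun c => c.val == 0)
      = ∑ HV : (Fin n → Fin (n + 1) → Bool) × (Fin (n + 1) → Fin n → Bool), Gterm n z HV := by
    rw [Fintype.sum_prod_type]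
    simp only [Smat, Tmat]
    rw [sum_swap4 (fun (i b : Fin n → Bool) (h : Fin n → Fin (n + 1) → Bool)
      (v : Fin (n + 1) → Fin n → Bool) =>
      if (∀ r, h r 0 = i r) ∧ (∀ r, h r (Fin.last n) = (r.val == 0)) ∧
          (∀ c, v 0 c = b c) ∧ (∀ c, v (Fin.last n) c = (c.val == 0)) then
        (PiTensorProduct.map fun rc : Fin n × Fin n =>
          Lop 0 z (h rc.1 rc.2.succ) (v rc.1.castSucc rc.2) (h rc.1 rc.2.castSucc)
            (v rc.1.succ rc.2))
      else 0)]
    rw [Finset.smul_sum]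
    refine Finset.sum_congr rfl fun h _ => ?_
    rw [Finset.smul_sum]
    refine Finset.sum_congr rfl fun v _ => ?_
    rw [collapse_ib]
    rw [Gterm]
    split_ifs with hcond
    · rfl
    · exact smul_zero z
  have rhs_eq : (∑ i ∈ Finset.range (n + 1),
        (gridSplit n).toLinearMap ∘ₗ
          TensorProduct.map (Xop n i z) (Bop n i) ∘ₗ (gridSplit n).symm.toLinearMap)
      = ∑ x ∈ (Finset.range (n + 1)) ×ˢ
          (Finset.univ : Finset ((Fin (n + 2) → Fin (n + 2) → Bool) ×
            (Fin (n + 2) → Fin (n + 2) → Bool))),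
          gterm n z x := by
    rw [Finset.sum_product]
    refine Finset.sum_congr rfl fun i hi => ?_
    rw [Fintype.sum_prod_type]
    simp only [Xop]
    rw [TPmap_sum_left, comp_sum_comp]
    refine Finset.sum_congr rfl fun hX _ => ?_
    rw [TPmap_sum_left, comp_sum_comp]
    refine Finset.sum_congr rfl fun vX _ => ?_
    by_cases hbc : Xbc n i hX vX
    · rw [if_pos hbc, TensorProduct.map_smul_left, LinearMap.smul_comp, LinearMap.comp_smul,
        Bop_eq, gridSplit_conj, gterm, if_pos hbc]
      rfl
    · rw [if_neg hbc, TensorProduct.map_zero_left, LinearMap.zero_comp, LinearMap.comp_zero,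
        gterm, if_neg hbc]
  rw [lhs_eq, rhs_eq]
  refine (Finset.sum_bij_ne_zero
    (fun x _ _ => (PhiH n x.1 x.2.1, PhiV n x.1 x.2.2)) ?_ ?_ ?_ ?_).symm
  · intro a h₁ h₂
    exact Finset.mem_univ _
  · -- injectivity
    intro a₁ m₁ nz₁ a₂ m₂ nz₂ heq
    have hbc₁ : Xbc n a₁.1 a₁.2.1 a₁.2.2 := by
      by_contra hc; exact nz₁ (by rw [gterm, if_neg hc])
    have hbc₂ : Xbc n a₂.1 a₂.2.1 a₂.2.2 := by
      by_contra hc; exact nz₂ (by rw [gterm, if_neg hc])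
    have hi₁ : a₁.1 ≤ n := by
      have := (Finset.mem_product.mp m₁).1
      rw [Finset.mem_range] at this; omega
    have hi₂ : a₂.1 ≤ n := by
      have := (Finset.mem_product.mp m₂).1
      rw [Finset.mem_range] at this; omega
    have hHek : PhiH n a₁.1 a₁.2.1 = PhiH n a₂.1 a₂.2.1 := congrArg Prod.fst heq
    have hVek : PhiV n a₁.1 a₁.2.2 = PhiV n a₂.1 a₂.2.2 := congrArg Prod.snd heq
    obtain ⟨e1, e2, e3⟩ := Phi_inj n hn hi₁ hi₂ hbc₁ hbc₂ hHek hVek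
    exact Prod.ext e1 (Prod.ext e2 e3)
  · -- surjectivity
    intro HV _ hnz
    have hcond : (∀ r, HV.1 r (Fin.last n) = (r.val == 0)) ∧
        (∀ c, HV.2 (Fin.last n) c = (c.val == 0)) := by
      by_contra hc; exact hnz (by rw [Gterm, if_neg hc])
    have hNZ : ∀ rc : Fin n × Fin n, gridFam n z HV.1 HV.2 rc ≠ 0 := by
      intro rc hzero
      apply hnz
      rw [Gterm, if_pos hcond, PTmap_eq_zero _ rc hzero, smul_zero]
    obtain ⟨i₀, hi₀n, hbc₀, hPH, hPV⟩ := reconstruct hn hcond.1 hcond.2 hNZ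
    have e : Gterm n z HV = gterm n z (i₀, (hX0 n hn HV.1, vX0 n hn HV.2)) := by
      conv_lhs => rw [show HV = (PhiH n i₀ (hX0 n hn HV.1), PhiV n i₀ (vX0 n hn HV.2)) from
        Prod.ext hPH.symm hPV.symm]
      exact Gterm_Phi n i₀ hn hi₀n z hz _ _ hbc₀
    refine ⟨(i₀, (hX0 n hn HV.1, vX0 n hn HV.2)),
      Finset.mem_product.mpr ⟨Finset.mem_range.mpr (by omega), Finset.mem_univ _⟩, ?_, ?_⟩
    · rw [← e]; exact hnz
    · exact Prod.ext hPH hPV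
  · -- term equality
    intro a m nz
    have hbca : Xbc n a.1 a.2.1 a.2.2 := by
      by_contra hc; exact nz (by rw [gterm, if_neg hc])
    have hia : a.1 ≤ n := by
      have := (Finset.mem_product.mp m).1
      rw [Finset.mem_range] at this; omega
    exact (Gterm_Phi n a.1 hn hia z hz a.2.1 a.2.2 hbca).symm

end
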